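/- Let ⟨x,y⟩₁ = −x₀y₀ + x₁y₁ + x₂y₂ + x₃y₃ + x₄y₄ denote the Lorentzian bilinear form on ℝ⁵, let a, b be nonzero real numbers, and let Θ(t,u) = (a u² + a/b² + a + 1/(4a), u, cos(t)/b, sin(t)/b, a u² + a/b² + a − 1/(4a)). Define ξ₁(t,u) = (0, 0, cos t, sin t, 0), ξ₂(t,u) = ((4a²u² + 3)/(2√2), √2·a u, 0, 0, (4a²u² + 1)/(2√2)), and ξ₃(t,u) = ((1 − 4a²u²)/(2√2), −√2·a u, 0, 0, (3 − 4a²u²)/(2√2)). Then for all (t,u): ⟨ξ₁,ξ₁⟩₁ = 1, ⟨ξ₂,ξ₂⟩₁ = −1, ⟨ξ₃,ξ₃⟩₁ = 1; ⟨ξᵢ,ξⱼ⟩₁ = 0 for i ≠ j; ⟨ξᵢ, ∂ₜΘ⟩₁ = ⟨ξᵢ, ∂ᵤΘ⟩₁ = 0 for each i; and each partial derivative ∂ₜξᵢ and ∂ᵤξᵢ lies in the linear span of {∂ₜΘ(t,u), ∂ᵤΘ(t,u)} (explicitly, ∂ₜξ₁ = b·∂ₜΘ, ∂ᵤξ₁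 = 0, ∂ₜξ₂ = ∂ₜξ₃ = 0, ∂ᵤξ₂ = √2·a·∂ᵤΘ, ∂ᵤξ₃ = −√2·a·∂ᵤΘ). -/

import Mathlib

/-! Everything is a computation with explicit vectors: beyond ring identities it only uses
`cos² t + sin² t = 1` and `√2 ^ 2 = 2`. -/

/-- The Lorentzian bilinear form on `ℝ⁵` with timelike coordinate `x₀`. -/
def lor5 (x y : Fin 5 → ℝ) : ℝ :=
  -(x 0 * y 0) + x 1 * y 1 + x 2 * y 2 + x 3 * y 3 + x 4 * y 4

open Real

theorem Real.sqrt_two_pow_four : √2 ^ 4 = 4 := by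
  rw [show 4 = 2 * 2 from rfl, pow_mul, sq_sqrt zero_le_two]; norm_num

theorem vec5_lor5 (x₀ x₁ x₂ x₃ x₄ y₀ y₁ y₂ y₃ y₄ : ℝ) :
    lor5 ![x₀, x₁, x₂, x₃, x₄] ![y₀, y₁, y₂, y₃, y₄] =
      -(x₀ * y₀) + x₁ * y₁ + x₂ * y₂ + x₃ * y₃ + x₄ * y₄ := rfl

section SpanPair

variable {R M : Type*} [Semiring R] [AddCommMonoid M] [Module R M]

theorem Submodule.smul_mem_span_pair_left (c : R) (x y : M) : c • x ∈ span R {x, y} :=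
  smul_mem _ c (subset_span (Set.mem_insert x {y}))

theorem Submodule.smul_mem_span_pair_right (c : R) (x y : M) : c • y ∈ span R {x, y} :=
  smul_mem _ c (subset_span (Set.mem_insert_of_mem x rfl))

end SpanPair

noncomputable section

namespace FlatSurface

def Θ (a b t u : ℝ) : Fin 5 → ℝ :=
  ![a * u ^ 2 + a / b ^ 2 + a + 1 / (4 * a), u, cos t / b, sin t / b,
    a * u ^ 2 + a / b ^ 2 + a - 1 / (4 * a)]

def ξ₁ (t _u : ℝ) : Fin 5 → ℝ := ![0, 0, cos t, sin t, 0]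

def ξ₂ (a _t u : ℝ) : Fin 5 → ℝ :=
  ![(4 * a ^ 2 * u ^ 2 + 3) / (2 * √2), √2 * a * u, 0, 0, (4 * a ^ 2 * u ^ 2 + 1) / (2 * √2)]

def ξ₃ (a _t u : ℝ) : Fin 5 → ℝ :=
  ![(1 - 4 * a ^ 2 * u ^ 2) / (2 * √2), -(√2 * a * u), 0, 0, (3 - 4 * a ^ 2 * u ^ 2) / (2 * √2)]

variable {a b t u : ℝ}

theorem deriv_Θ_t : deriv (Θ a b · u) t = ![0, 0, -sin t / b, cos t / b, 0] := by
  rw [deriv_pi fun i => by fin_cases i <;> simp [Θ]]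
  ext i; fin_cases i <;> simp [Θ, neg_div]

theorem deriv_Θ_u : deriv (Θ a b t ·) u = ![2 * a * u, 1, 0, 0, 2 * a * u] := by
  rw [deriv_pi fun i => by fin_cases i <;> simp [Θ]]
  ext i; fin_cases i <;> simp [Θ] <;> ring

theorem deriv_ξ₁_t (hb : b ≠ 0) : deriv (ξ₁ · u) t = b • deriv (Θ a b · u) t := by
  rw [deriv_Θ_t, deriv_pi fun i => by fin_cases i <;> simp [ξ₁]]
  ext i; fin_cases i <;> simp [ξ₁, mul_div_cancel₀ _ hb]

theorem deriv_ξ₁_u : deriv (ξ₁ t ·) u = 0 := deriv_const u _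

theorem deriv_ξ₂_t : deriv (ξ₂ a · u) t = 0 := deriv_const t _

theorem deriv_ξ₃_t : deriv (ξ₃ a · u) t = 0 := deriv_const t _

theorem deriv_ξ₂_u : deriv (ξ₂ a t ·) u = (√2 * a) • deriv (Θ a b t ·) u := by
  rw [deriv_Θ_u, deriv_pi fun i => by fin_cases i <;> simp [ξ₂] <;> fun_prop]
  ext i; fin_cases i <;> simp [ξ₂] <;> field_simp <;> rw [sq_sqrt zero_le_two] <;> ring

theorem deriv_ξ₃_u : deriv (ξ₃ a t ·) u = (-(√2 * a)) • deriv (Θ a b t ·) u := by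
  rw [deriv_Θ_u, deriv_pi fun i => by fin_cases i <;> simp [ξ₃] <;> fun_prop]
  ext i; fin_cases i <;> simp [ξ₃] <;> field_simp <;> rw [sq_sqrt zero_le_two] <;> ring

theorem lor5_ξ₁_self : lor5 (ξ₁ t u) (ξ₁ t u) = 1 := by
  rw [ξ₁, vec5_lor5]; linear_combination sin_sq_add_cos_sq t

theorem lor5_ξ₂_self : lor5 (ξ₂ a t u) (ξ₂ a t u) = -1 := by
  rw [ξ₂, vec5_lor5]; field_simp
  rw [sqrt_two_pow_four, sq_sqrt zero_le_two]; ring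

theorem lor5_ξ₃_self : lor5 (ξ₃ a t u) (ξ₃ a t u) = 1 := by
  rw [ξ₃, vec5_lor5]; field_simp
  rw [sqrt_two_pow_four, sq_sqrt zero_le_two]; ring

theorem lor5_ξ₁_ξ₂ : lor5 (ξ₁ t u) (ξ₂ a t u) = 0 := by
  rw [ξ₁, ξ₂, vec5_lor5]; ring

theorem lor5_ξ₁_ξ₃ : lor5 (ξ₁ t u) (ξ₃ a t u) = 0 := by
  rw [ξ₁, ξ₃, vec5_lor5]; ring

theorem lor5_ξ₂_ξ₃ : lor5 (ξ₂ a t u) (ξ₃ a t u) = 0 := by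
  rw [ξ₂, ξ₃, vec5_lor5]; field_simp
  rw [sqrt_two_pow_four]; ring

theorem lor5_ξ₁_deriv_Θ_t : lor5 (ξ₁ t u) (deriv (Θ a b · u) t) = 0 := by
  rw [ξ₁, deriv_Θ_t, vec5_lor5]; ring

theorem lor5_ξ₁_deriv_Θ_u : lor5 (ξ₁ t u) (deriv (Θ a b t ·) u) = 0 := by
  rw [ξ₁, deriv_Θ_u, vec5_lor5]; ring

theorem lor5_ξ₂_deriv_Θ_t : lor5 (ξ₂ a t u) (deriv (Θ a b · u) t) = 0 := by
  rw [ξ₂, deriv_Θ_t, vec5_lor5]; ring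

theorem lor5_ξ₂_deriv_Θ_u : lor5 (ξ₂ a t u) (deriv (Θ a b t ·) u) = 0 := by
  rw [ξ₂, deriv_Θ_u, vec5_lor5]; field_simp
  rw [sq_sqrt zero_le_two]; ring

theorem lor5_ξ₃_deriv_Θ_t : lor5 (ξ₃ a t u) (deriv (Θ a b · u) t) = 0 := by
  rw [ξ₃, deriv_Θ_t, vec5_lor5]; ring

theorem lor5_ξ₃_deriv_Θ_u : lor5 (ξ₃ a t u) (deriv (Θ a b t ·) u) = 0 := by
  rw [ξ₃, deriv_Θ_u, vec5_lor5]; field_simp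
  rw [sq_sqrt zero_le_two]; ring

end FlatSurface

end

open FlatSurface

theorem stmt_11_general (a b : ℝ) (hb : b ≠ 0)
    (Θ ξ₁ ξ₂ ξ₃ : ℝ → ℝ → Fin 5 → ℝ)
    (hΘ : ∀ t u : ℝ, Θ t u =
      ![a * u ^ 2 + a / b ^ 2 + a + 1 / (4 * a), u,
        Real.cos t / b, Real.sin t / b,
        a * u ^ 2 + a / b ^ 2 + a - 1 / (4 * a)])
    (hξ₁ : ∀ t u : ℝ, ξ₁ t u = ![0, 0, Real.cos t, Real.sin t, 0])
    (hξ₂ : ∀ t u : ℝ, ξ₂ t u =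
      ![(4 * a ^ 2 * u ^ 2 + 3) / (2 * Real.sqrt 2), Real.sqrt 2 * a * u, 0, 0,
        (4 * a ^ 2 * u ^ 2 + 1) / (2 * Real.sqrt 2)])
    (hξ₃ : ∀ t u : ℝ, ξ₃ t u =
      ![(1 - 4 * a ^ 2 * u ^ 2) / (2 * Real.sqrt 2), -(Real.sqrt 2 * a * u), 0, 0,
        (3 - 4 * a ^ 2 * u ^ 2) / (2 * Real.sqrt 2)]) :
    ∀ t u : ℝ,
      lor5 (ξ₁ t u) (ξ₁ t u) = 1 ∧
      lor5 (ξ₂ t u) (ξ₂ t u) = -1 ∧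
      lor5 (ξ₃ t u) (ξ₃ t u) = 1 ∧
      lor5 (ξ₁ t u) (ξ₂ t u) = 0 ∧
      lor5 (ξ₁ t u) (ξ₃ t u) = 0 ∧
      lor5 (ξ₂ t u) (ξ₃ t u) = 0 ∧
      lor5 (ξ₁ t u) (deriv (fun t' => Θ t' u) t) = 0 ∧
      lor5 (ξ₁ t u) (deriv (fun u' => Θ t u') u) = 0 ∧
      lor5 (ξ₂ t u) (deriv (fun t' => Θ t' u) t) = 0 ∧
      lor5 (ξ₂ t u) (deriv (fun u' => Θ t u') u) = 0 ∧
      lor5 (ξ₃ t u) (deriv (fun t' => Θ t' u) t) = 0 ∧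
      lor5 (ξ₃ t u) (deriv (fun u' => Θ t u') u) = 0 ∧
      deriv (fun t' => ξ₁ t' u) t = b • deriv (fun t' => Θ t' u) t ∧
      deriv (fun u' => ξ₁ t u') u = 0 ∧
      deriv (fun t' => ξ₂ t' u) t = 0 ∧
      deriv (fun u' => ξ₂ t u') u = (Real.sqrt 2 * a) • deriv (fun u' => Θ t u') u ∧
      deriv (fun t' => ξ₃ t' u) t = 0 ∧
      deriv (fun u' => ξ₃ t u') u = (-(Real.sqrt 2 * a)) • deriv (fun u' => Θ t u') u ∧
      deriv (fun t' => ξ₁ t' u) t ∈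
        Submodule.span ℝ ({deriv (fun t' => Θ t' u) t, deriv (fun u' => Θ t u') u} : Set (Fin 5 → ℝ)) ∧
      deriv (fun u' => ξ₁ t u') u ∈
        Submodule.span ℝ ({deriv (fun t' => Θ t' u) t, deriv (fun u' => Θ t u') u} : Set (Fin 5 → ℝ)) ∧
      deriv (fun t' => ξ₂ t' u) t ∈
        Submodule.span ℝ ({deriv (fun t' => Θ t' u) t, deriv (fun u' => Θ t u') u} : Set (Fin 5 → ℝ)) ∧
      deriv (fun u' => ξ₂ t u') u ∈
        Submodule.span ℝ ({deriv (fun t' => Θ t' u) t, deriv (fun u' => Θ t u') u} : Set (Fin 5 → ℝ)) ∧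
      deriv (fun t' => ξ₃ t' u) t ∈
        Submodule.span ℝ ({deriv (fun t' => Θ t' u) t, deriv (fun u' => Θ t u') u} : Set (Fin 5 → ℝ)) ∧
      deriv (fun u' => ξ₃ t u') u ∈
        Submodule.span ℝ ({deriv (fun t' => Θ t' u) t, deriv (fun u' => Θ t u') u} : Set (Fin 5 → ℝ)) := by
  obtain rfl : Θ = FlatSurface.Θ a b := funext₂ hΘ
  obtain rfl : ξ₁ = FlatSurface.ξ₁ := funext₂ hξ₁
  obtain rfl : ξ₂ = FlatSurface.ξ₂ a := funext₂ hξ₂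
  obtain rfl : ξ₃ = FlatSurface.ξ₃ a := funext₂ hξ₃
  intro t u
  refine ⟨lor5_ξ₁_self, lor5_ξ₂_self, lor5_ξ₃_self, lor5_ξ₁_ξ₂, lor5_ξ₁_ξ₃, lor5_ξ₂_ξ₃,
    lor5_ξ₁_deriv_Θ_t, lor5_ξ₁_deriv_Θ_u, lor5_ξ₂_deriv_Θ_t, lor5_ξ₂_deriv_Θ_u,
    lor5_ξ₃_deriv_Θ_t, lor5_ξ₃_deriv_Θ_u, deriv_ξ₁_t hb, deriv_ξ₁_u, deriv_ξ₂_t, deriv_ξ₂_u,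
    deriv_ξ₃_t, deriv_ξ₃_u, ?_, ?_, ?_, ?_, ?_, ?_⟩
  · rw [deriv_ξ₁_t hb]; exact Submodule.smul_mem_span_pair_left _ _ _
  · rw [deriv_ξ₁_u]; exact zero_mem _
  · rw [deriv_ξ₂_t]; exact zero_mem _
  · rw [deriv_ξ₂_u]; exact Submodule.smul_mem_span_pair_right _ _ _
  · rw [deriv_ξ₃_t]; exact zero_mem _
  · rw [deriv_ξ₃_u]; exact Submodule.smul_mem_span_pair_right _ _ _

/-- Case 3 of the proof of Theorem 4.8: `ξ₁, ξ₂, ξ₃` form a parallel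
pseudo-orthonormal basis of the normal bundle in `ℝ⁵₁` of the flat integral
surface of case (3) of Proposition 4.3. -/
theorem stmt_11 (a b : ℝ) (ha : a ≠ 0) (hb : b ≠ 0)
    (Θ ξ₁ ξ₂ ξ₃ : ℝ → ℝ → Fin 5 → ℝ)
    (hΘ : ∀ t u : ℝ, Θ t u =
      ![a * u ^ 2 + a / b ^ 2 + a + 1 / (4 * a), u,
        Real.cos t / b, Real.sin t / b,
        a * u ^ 2 + a / b ^ 2 + a - 1 / (4 * a)])
    (hξ₁ : ∀ t u : ℝ, ξ₁ t u = ![0, 0, Real.cos t, Real.sin t, 0])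
    (hξ₂ : ∀ t u : ℝ, ξ₂ t u =
      ![(4 * a ^ 2 * u ^ 2 + 3) / (2 * Real.sqrt 2), Real.sqrt 2 * a * u, 0, 0,
        (4 * a ^ 2 * u ^ 2 + 1) / (2 * Real.sqrt 2)])
    (hξ₃ : ∀ t u : ℝ, ξ₃ t u =
      ![(1 - 4 * a ^ 2 * u ^ 2) / (2 * Real.sqrt 2), -(Real.sqrt 2 * a * u), 0, 0,
        (3 - 4 * a ^ 2 * u ^ 2) / (2 * Real.sqrt 2)]) :
    ∀ t u : ℝ,
      lor5 (ξ₁ t u) (ξ₁ t u) = 1 ∧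
      lor5 (ξ₂ t u) (ξ₂ t u) = -1 ∧
      lor5 (ξ₃ t u) (ξ₃ t u) = 1 ∧
      lor5 (ξ₁ t u) (ξ₂ t u) = 0 ∧
      lor5 (ξ₁ t u) (ξ₃ t u) = 0 ∧
      lor5 (ξ₂ t u) (ξ₃ t u) = 0 ∧
      lor5 (ξ₁ t u) (deriv (fun t' => Θ t' u) t) = 0 ∧
      lor5 (ξ₁ t u) (deriv (fun u' => Θ t u') u) = 0 ∧
      lor5 (ξ₂ t u) (deriv (fun t' => Θ t' u) t) = 0 ∧
      lor5 (ξ₂ t u) (deriv (fun u' => Θ t u') u) = 0 ∧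
      lor5 (ξ₃ t u) (deriv (fun t' => Θ t' u) t) = 0 ∧
      lor5 (ξ₃ t u) (deriv (fun u' => Θ t u') u) = 0 ∧
      deriv (fun t' => ξ₁ t' u) t = b • deriv (fun t' => Θ t' u) t ∧
      deriv (fun u' => ξ₁ t u') u = 0 ∧
      deriv (fun t' => ξ₂ t' u) t = 0 ∧
      deriv (fun u' => ξ₂ t u') u = (Real.sqrt 2 * a) • deriv (fun u' => Θ t u') u ∧
      deriv (fun t' => ξ₃ t' u) t = 0 ∧
      deriv (fun u' => ξ₃ t u') u = (-(Real.sqrt 2 * a)) • deriv (fun u' => Θ t u') u ∧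
      deriv (fun t' => ξ₁ t' u) t ∈
        Submodule.span ℝ ({deriv (fun t' => Θ t' u) t, deriv (fun u' => Θ t u') u} : Set (Fin 5 → ℝ)) ∧
      deriv (fun u' => ξ₁ t u') u ∈
        Submodule.span ℝ ({deriv (fun t' => Θ t' u) t, deriv (fun u' => Θ t u') u} : Set (Fin 5 → ℝ)) ∧
      deriv (fun t' => ξ₂ t' u) t ∈
        Submodule.span ℝ ({deriv (fun t' => Θ t' u) t, deriv (fun u' => Θ t u') u} : Set (Fin 5 → ℝ)) ∧
      deriv (fun u' => ξ₂ t u') u ∈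
        Submodule.span ℝ ({deriv (fun t' => Θ t' u) t, deriv (fun u' => Θ t u') u} : Set (Fin 5 → ℝ)) ∧
      deriv (fun t' => ξ₃ t' u) t ∈
        Submodule.span ℝ ({deriv (fun t' => Θ t' u) t, deriv (fun u' => Θ t u') u} : Set (Fin 5 → ℝ)) ∧
      deriv (fun u' => ξ₃ t u') u ∈
        Submodule.span ℝ ({deriv (fun t' => Θ t' u) t, deriv (fun u' => Θ t u') u} : Set (Fin 5 → ℝ)) :=
  stmt_11_general a b hb Θ ξ₁ ξ₂ ξ₃ hΘ hξ₁ hξ₂ hξ₃
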